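/- arXiv:1709.02568 — 5 statements merged into one kernel-verified Lean document; each statement's English description precedes it below -/
import Mathlib

section
/- Let s, d be positive integers. The function u ↦ 1 / (1 + ∑_{α ∈ ℕ₀^d, 0 < |α|₁ ≤ s} ∏_{j=1}^d (2π u_j)^{2α_j}) is Lebesgue integrable on ℝ^d if and only if 2s > d. -/
/-!
The weight `v_{d,s}(u)²` is comparable to `(1 + ‖u‖)^{2s}` for the sup norm: each monomial is at
most `(2π (1 + ‖u‖))^{2s}`, and the pure power `(2π u_j)^{2s}` at a coordinate `j` realising the sup
norm already dominates `‖u‖^{2s}`. In polar coordinates, `(1 + ‖x‖)^{-r}` on a `d`-dimensional space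
is integrable iff `y^{d-1} (1 + y)^{-r} ≍ y^{d-1-r}` is integrable at infinity, i.e. iff `d < r`.
-/

open MeasureTheory Real

theorem Asymptotics.IsTheta.integrable_iff {α E F : Type*} [MeasurableSpace α] {μ : Measure α}
    [NormedAddCommGroup E] [NormedAddCommGroup F] {f : α → E} {g : α → F}
    (h : f =Θ[⊤] g) (hf : AEStronglyMeasurable f μ) (hg : AEStronglyMeasurable g μ) :
    Integrable f μ ↔ Integrable g μ :=
  ⟨h.isBigO_symm.integrable hg, h.isBigO.integrable hf⟩

theorem integrable_one_add_norm_rpow_neg_iff {E : Type*} [NormedAddCommGroup E]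
    [NormedSpace ℝ E] [FiniteDimensional ℝ E] [Nontrivial E] [MeasurableSpace E] [BorelSpace E]
    (μ : Measure E) [μ.IsAddHaarMeasure] {r : ℝ} (hr : 0 ≤ r) :
    Integrable (fun x : E ↦ (1 + ‖x‖) ^ (-r)) μ ↔ (Module.finrank ℝ E : ℝ) < r := by
  refine ⟨fun h ↦ ?_, integrable_one_add_norm⟩
  set n := Module.finrank ℝ E
  have hn : 1 ≤ n := Module.finrank_pos
  have hbound {y : ℝ} (hy : 1 ≤ y) :
      y ^ ((n : ℝ) - 1 - r) ≤ 2 ^ r * (y ^ (n - 1) * (1 + y) ^ (-r)) := by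
    have hy0 : 0 < y := by linarith
    calc y ^ ((n : ℝ) - 1 - r) = 2 ^ r * (y ^ (n - 1) * (2 * y) ^ (-r)) := by
          rw [mul_rpow zero_le_two hy0.le, rpow_neg zero_le_two, rpow_sub hy0,
            ← rpow_natCast, Nat.cast_sub hn, rpow_neg hy0.le]
          field_simp
          simp
      _ ≤ 2 ^ r * (y ^ (n - 1) * (1 + y) ^ (-r)) := by
          gcongr 2 ^ r * (_ * ?_)
          exact rpow_le_rpow_of_nonpos (by positivity) (by linarith) (by linarith)
  rw [integrable_fun_norm_addHaar μ (f := fun y ↦ (1 + y) ^ (-r))] at h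
  have hpow : IntegrableOn (fun y : ℝ ↦ y ^ ((n : ℝ) - 1 - r)) (Set.Ioi 1) := by
    refine ((h.mono_set (Set.Ioi_subset_Ioi zero_le_one)).const_mul (2 ^ r)).mono'
      (by fun_prop) ?_
    filter_upwards [ae_restrict_mem measurableSet_Ioi] with y (hy : 1 < y)
    rw [norm_of_nonneg (rpow_nonneg (by linarith) _)]
    exact hbound hy.le
  have := (integrableOn_Ioi_rpow_iff zero_lt_one).1 hpow
  linarith

-- `Iic (s, …, s)` only makes the index set finite: `|α|₁ ≤ s` already forces `α ≤ (s, …, s)`.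
def sobolevMultiIndices (d s : ℕ) : Finset (Fin d → ℕ) :=
  (Finset.Iic (fun _ => s : Fin d → ℕ)).filter (fun α => 0 < ∑ j, α j ∧ ∑ j, α j ≤ s)

noncomputable def sobolevMonomial {d : ℕ} (u : Fin d → ℝ) (α : Fin d → ℕ) : ℝ :=
  ∏ j, (2 * π * u j) ^ (2 * α j)

/-- `v_{d,s}(u)²`. -/
noncomputable def sobolevWeightSq (d s : ℕ) (u : Fin d → ℝ) : ℝ :=
  1 + ∑ α ∈ sobolevMultiIndices d s, sobolevMonomial u α

section SobolevWeight

variable {d s : ℕ}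

lemma single_mem_sobolevMultiIndices (hs : 1 ≤ s) (j : Fin d) :
    Pi.single j s ∈ sobolevMultiIndices d s := by
  refine Finset.mem_filter.2 ⟨Finset.mem_Iic.2 fun i => ?_, ?_⟩
  · rcases eq_or_ne i j with rfl | h
    · simp
    · simp [Pi.single_eq_of_ne h]
  · simp only [Finset.sum_pi_single', Finset.mem_univ, if_true]
    omega

lemma sobolevMonomial_nonneg (u : Fin d → ℝ) (α : Fin d → ℕ) : 0 ≤ sobolevMonomial u α :=
  Finset.prod_nonneg fun j _ => by rw [pow_mul]; positivity

lemma sobolevMonomial_single (u : Fin d → ℝ) (j : Fin d) (s : ℕ) :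
    sobolevMonomial u (Pi.single j s) = (2 * π * u j) ^ (2 * s) := by
  rw [sobolevMonomial, Fintype.prod_eq_single j fun i hi => by simp [Pi.single_eq_of_ne hi]]
  simp

lemma sobolevMonomial_le (u : Fin d → ℝ) {α : Fin d → ℕ} (hα : α ∈ sobolevMultiIndices d s) :
    sobolevMonomial u α ≤ (2 * π) ^ (2 * s) * (1 + ‖u‖) ^ (2 * s) := by
  have hbase : 1 ≤ 2 * π * (1 + ‖u‖) :=
    one_le_mul_of_one_le_of_one_le (by linarith [pi_gt_three])
      (le_add_of_nonneg_right (norm_nonneg u))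
  calc sobolevMonomial u α ≤ ∏ j, (2 * π * (1 + ‖u‖)) ^ (2 * α j) := by
        refine Finset.prod_le_prod (fun j _ => by rw [pow_mul]; positivity) fun j _ => ?_
        rw [← (even_two_mul (α j)).pow_abs, abs_mul, abs_of_pos two_pi_pos]
        gcongr
        exact (norm_le_pi_norm u j).trans (le_add_of_nonneg_left zero_le_one)
    _ = (2 * π * (1 + ‖u‖)) ^ (2 * ∑ j, α j) := by
        rw [Finset.prod_pow_eq_pow_sum, Finset.mul_sum]
    _ ≤ (2 * π * (1 + ‖u‖)) ^ (2 * s) :=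
        pow_le_pow_right₀ hbase (Nat.mul_le_mul_left 2 (Finset.mem_filter.1 hα).2.2)
    _ = (2 * π) ^ (2 * s) * (1 + ‖u‖) ^ (2 * s) := mul_pow _ _ _

lemma one_le_sobolevWeightSq (u : Fin d → ℝ) : 1 ≤ sobolevWeightSq d s u :=
  le_add_of_nonneg_right (Finset.sum_nonneg fun α _ => sobolevMonomial_nonneg u α)

lemma continuous_sobolevWeightSq : Continuous (sobolevWeightSq d s) := by
  unfold sobolevWeightSq sobolevMonomial
  fun_prop

lemma sobolevWeightSq_le (u : Fin d → ℝ) :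
    sobolevWeightSq d s u ≤
      (1 + (sobolevMultiIndices d s).card * (2 * π) ^ (2 * s)) * (1 + ‖u‖) ^ (2 * s) := by
  have hsum := Finset.sum_le_card_nsmul (sobolevMultiIndices d s) _ _
    fun α hα => sobolevMonomial_le u hα
  have hone : 1 ≤ (1 + ‖u‖) ^ (2 * s) := one_le_pow₀ (le_add_of_nonneg_right (norm_nonneg u))
  rw [nsmul_eq_mul] at hsum
  rw [sobolevWeightSq, add_mul, one_mul, mul_assoc]
  exact add_le_add hone hsum

lemma one_add_pow_le_sobolevWeightSq (hs : 1 ≤ s) (u : Fin d → ℝ) (j : Fin d) :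
    1 + (2 * π * u j) ^ (2 * s) ≤ sobolevWeightSq d s u := by
  rw [← sobolevMonomial_single]
  exact add_le_add_right (Finset.single_le_sum (fun α _ => sobolevMonomial_nonneg u α)
    (single_mem_sobolevMultiIndices hs j)) 1

lemma one_add_norm_pow_le_sobolevWeightSq (hd : 1 ≤ d) (hs : 1 ≤ s) (u : Fin d → ℝ) :
    (1 + ‖u‖) ^ (2 * s) ≤ 2 ^ (2 * s - 1) * sobolevWeightSq d s u := by
  have : Nonempty (Fin d) := ⟨⟨0, hd⟩⟩
  obtain ⟨j, hj : ‖u j‖ = ‖u‖⟩ := (IsGreatest.pi_norm u).1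
  have hnorm : ‖u‖ ^ (2 * s) ≤ (2 * π * u j) ^ (2 * s) := by
    rw [← hj, Real.norm_eq_abs, ← (even_two_mul s).pow_abs (2 * π * u j), abs_mul,
      abs_of_pos two_pi_pos]
    gcongr
    exact le_mul_of_one_le_left (abs_nonneg _) (by linarith [pi_gt_three])
  calc (1 + ‖u‖) ^ (2 * s) ≤ 2 ^ (2 * s - 1) * (1 ^ (2 * s) + ‖u‖ ^ (2 * s)) :=
        add_pow_le zero_le_one (norm_nonneg u) _
    _ ≤ 2 ^ (2 * s - 1) * sobolevWeightSq d s u := by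
        rw [one_pow]
        gcongr
        linarith [one_add_pow_le_sobolevWeightSq hs u j]

lemma isTheta_sobolevWeightSq (hd : 1 ≤ d) (hs : 1 ≤ s) :
    sobolevWeightSq d s =Θ[⊤] fun u => (1 + ‖u‖) ^ (2 * s) := by
  have hD (u : Fin d → ℝ) : ‖sobolevWeightSq d s u‖ = sobolevWeightSq d s u :=
    norm_of_nonneg (zero_le_one.trans (one_le_sobolevWeightSq u))
  have hB (u : Fin d → ℝ) : ‖(1 + ‖u‖) ^ (2 * s)‖ = (1 + ‖u‖) ^ (2 * s) :=
    norm_of_nonneg (by positivity)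
  refine ⟨.of_bound (1 + (sobolevMultiIndices d s).card * (2 * π) ^ (2 * s))
    (.of_forall fun u => ?_), .of_bound (2 ^ (2 * s - 1)) (.of_forall fun u => ?_)⟩
  · rw [hD, hB]
    exact sobolevWeightSq_le u
  · rw [hD, hB]
    exact one_add_norm_pow_le_sobolevWeightSq hd hs u

end SobolevWeight

/-- `u ↦ 1 / v_{d,s}(u)²` is Lebesgue integrable on `ℝ^d` iff `2s > d`. -/
theorem integrable_inv_sobolev_weight_iff (d s : ℕ) (hd : 1 ≤ d) (hs : 1 ≤ s) :
    MeasureTheory.Integrable (fun u : Fin d → ℝ =>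
      1 / (1 + ∑ α ∈ (Finset.Iic (fun _ => s : Fin d → ℕ)).filter
            (fun α => 0 < ∑ j, α j ∧ ∑ j, α j ≤ s),
          ∏ j, (2 * π * u j) ^ (2 * α j))) ↔ d < 2 * s := by
  have : Nontrivial (Fin d → ℝ) := have : Nonempty (Fin d) := ⟨⟨0, hd⟩⟩; inferInstance
  have hpow : (fun u : Fin d → ℝ => ((1 + ‖u‖) ^ (2 * s))⁻¹) =
      fun u => (1 + ‖u‖) ^ (-((2 * s : ℕ) : ℝ)) := by
    funext u
    rw [rpow_neg (by positivity), rpow_natCast]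
  simp only [one_div]
  change Integrable (fun u => (sobolevWeightSq d s u)⁻¹) ↔ _
  rw [(isTheta_sobolevWeightSq hd hs).inv.integrable_iff
      continuous_sobolevWeightSq.measurable.inv.aestronglyMeasurable
      (Measurable.aestronglyMeasurable (by fun_prop)), hpow,
    integrable_one_add_norm_rpow_neg_iff volume (Nat.cast_nonneg _), Module.finrank_fin_fun]
  exact Nat.cast_lt
end

section
/- Let d ≥ 1 and let x, t ∈ ℝ^d with x_j ≠ t_j for all j = 1, …, d. Then ∫_{[−1/(2π),1/(2π)]^d} ∏_{j=1}^d (1 − 4π² u_j²) cos(2π (x_j − t_j) u_j) du = ∏_{j=1}^d (2/(π (x_j − t_j)³)) (sin(x_j − t_j) − (x_j − t_j) cos(x_j − t_j)). In other words, the reproducing kernel of the Sobolev space of infinite smoothness is K_{d,∞}(x,t) = ∏_{j=1}^d (2/(π(x_j−t_j)³))(sin(x_j−t_j) − (x_j−t_j)cos(x_j−t_j)). -/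
open MeasureTheory Real

/-!
The integrand and the box both factor over the coordinates, so by Fubini the integral is the
product of the one-dimensional integrals `∫_{-a}^{a} (1 - (u/a)²) cos (b u) du` with
`a = 1/(2π)` and `b = 2π(x_j - t_j)`. Integrating by parts twice gives the antiderivative used
below; since the weight vanishes at `±a`, only the terms coming from its derivative survive,
leaving `4 (sin ab - ab cos ab) / (a² b³)`.
-/

theorem setIntegral_univ_pi_prod_eq_prod {𝕜 ι : Type*} [RCLike 𝕜] [Fintype ι] {E : ι → Type*}
    {mE : ∀ i, MeasurableSpace (E i)} {μ : (i : ι) → Measure (E i)} [∀ i, SigmaFinite (μ i)]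
    (s : (i : ι) → Set (E i)) (f : (i : ι) → E i → 𝕜) :
    ∫ x in Set.univ.pi s, ∏ i, f i (x i) ∂(Measure.pi μ) = ∏ i, ∫ x in s i, f i x ∂(μ i) := by
  rw [Measure.restrict_pi_pi, integral_fintype_prod_eq_prod]

theorem hasDerivAt_antideriv_one_sub_div_sq_mul_cos {a b : ℝ} (ha : a ≠ 0) (hb : b ≠ 0) (u : ℝ) :
    HasDerivAt (fun u ↦ (1 - (u / a) ^ 2) * sin (b * u) / b - 2 * u * cos (b * u) / (a ^ 2 * b ^ 2)
        + 2 * sin (b * u) / (a ^ 2 * b ^ 3))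
      ((1 - (u / a) ^ 2) * cos (b * u)) u := by
  have hbu : HasDerivAt (fun u ↦ b * u) b u := by simpa using (hasDerivAt_id u).const_mul b
  have hsin := hbu.sin
  have hcos := hbu.cos
  have hquad : HasDerivAt (fun u ↦ 1 - (u / a) ^ 2) (-(2 * (u / a) * (1 / a))) u := by
    simpa using ((hasDerivAt_id u).div_const a).pow 2 |>.const_sub 1
  have hlin : HasDerivAt (fun u ↦ 2 * u) 2 u := by simpa using (hasDerivAt_id u).const_mul 2
  refine ((((hquad.mul hsin).div_const b).sub ((hlin.mul hcos).div_const (a ^ 2 * b ^ 2))).add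
    ((hsin.const_mul 2).div_const (a ^ 2 * b ^ 3))).congr_deriv ?_
  field_simp
  ring

theorem integral_one_sub_div_sq_mul_cos {a b : ℝ} (ha : a ≠ 0) (hb : b ≠ 0) :
    ∫ u in -a..a, (1 - (u / a) ^ 2) * cos (b * u)
      = 4 * (sin (a * b) - a * b * cos (a * b)) / (a ^ 2 * b ^ 3) := by
  rw [intervalIntegral.integral_eq_sub_of_hasDerivAt
    (fun u _ ↦ hasDerivAt_antideriv_one_sub_div_sq_mul_cos ha hb u)
    (Continuous.intervalIntegrable (by fun_prop) _ _)]
  simp only [mul_neg, sin_neg, cos_neg, neg_div, div_self ha]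
  field_simp
  ring

theorem integral_Icc_one_sub_four_pi_sq_mul_cos {c : ℝ} (hc : c ≠ 0) :
    ∫ u in Set.Icc (-(1 / (2 * π))) (1 / (2 * π)),
        (1 - 4 * π ^ 2 * u ^ 2) * cos (2 * π * c * u)
      = 2 / (π * c ^ 3) * (sin c - c * cos c) := by
  have ha : 1 / (2 * π) ≠ 0 := by positivity
  have hb : 2 * π * c ≠ 0 := by positivity
  have hab : 1 / (2 * π) * (2 * π * c) = c := by field_simp
  rw [integral_Icc_eq_integral_Ioc,
    ← intervalIntegral.integral_of_le (neg_le_self (by positivity))]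
  convert integral_one_sub_div_sq_mul_cos ha hb using 1
  · congr 1 with u
    field_simp
    ring
  · rw [hab]
    field_simp
    ring

theorem kernel_infinite_smoothness_closed_form_general (d : ℕ)
    (x t : Fin d → ℝ) (hxt : ∀ j, x j ≠ t j) :
    ∫ u in Set.univ.pi (fun _ : Fin d => Set.Icc (-(1 / (2 * π))) (1 / (2 * π))),
        ∏ j, (1 - 4 * π ^ 2 * (u j) ^ 2) * Real.cos (2 * π * (x j - t j) * u j)
      = ∏ j, 2 / (π * (x j - t j) ^ 3) *
          (Real.sin (x j - t j) - (x j - t j) * Real.cos (x j - t j)) := by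
  rw [volume_pi, setIntegral_univ_pi_prod_eq_prod _
    fun j v ↦ (1 - 4 * π ^ 2 * v ^ 2) * cos (2 * π * (x j - t j) * v)]
  exact Finset.prod_congr rfl fun j _ ↦
    integral_Icc_one_sub_four_pi_sq_mul_cos (sub_ne_zero.mpr (hxt j))

/-- for `x_j ≠ t_j` for all `j`,
`∫_{[−1/(2π),1/(2π)]^d} ∏_j (1 − 4π²u_j²) cos(2π(x_j−t_j)u_j) du
  = ∏_j (2/(π(x_j−t_j)³))(sin(x_j−t_j) − (x_j−t_j)cos(x_j−t_j))`,
i.e. the closed form of the kernel `K_{d,∞}`. -/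
theorem kernel_infinite_smoothness_closed_form (d : ℕ) (hd : 1 ≤ d)
    (x t : Fin d → ℝ) (hxt : ∀ j, x j ≠ t j) :
    ∫ u in Set.univ.pi (fun _ : Fin d => Set.Icc (-(1 / (2 * π))) (1 / (2 * π))),
        ∏ j, (1 - 4 * π ^ 2 * (u j) ^ 2) * Real.cos (2 * π * (x j - t j) * u j)
      = ∏ j, 2 / (π * (x j - t j) ^ 3) *
          (Real.sin (x j - t j) - (x j - t j) * Real.cos (x j - t j)) :=
  kernel_infinite_smoothness_closed_form_general d x t hxt
end

section
/- For every real t, ∫_ℝ cos(2π t u) / (1 + (2π u)² + (2π u)⁴) du = (√3/3) e^{−|t|√3/2} sin(|t|/2 + π/6). -/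
/-!
The right-hand side is `K(t) = 2 Re (α e^{ζ|t|})` with `ζ = (-√3 + i)/2` and `α = (√3 - 3i)/12`.
For `Re c < 0` the Fourier transform of `e^{c|t|}` is `-2c / (c² + (2πw)²)`, and since `ζ²` and
`conj ζ²` are the two roots of `1 + y + y²`, a partial-fraction identity gives
`𝓕 K (w) = 1 / (1 + (2πw)² + (2πw)⁴)`. Both `K` and `𝓕 K` are integrable and `K` is continuous,
so Fourier inversion recovers `K(t)` as the inverse transform of this rational function, whose
real part is the cosine integral.
-/

open MeasureTheory Real Set FourierTransform
open scoped ComplexConjugate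

theorem Real.fourier_const_mul_add_const_mul {V : Type*} [NormedAddCommGroup V]
    [InnerProductSpace ℝ V] [FiniteDimensional ℝ V] [MeasurableSpace V] [BorelSpace V]
    {f g : V → ℂ} (hf : Integrable f) (hg : Integrable g) (a b : ℂ) (w : V) :
    𝓕 (fun v ↦ a * f v + b * g v) w = a * 𝓕 f w + b * 𝓕 g w := by
  have hf' := (Real.fourierIntegral_convergent_iff (μ := volume) w).2 hf
  have hg' := (Real.fourierIntegral_convergent_iff (μ := volume) w).2 hg
  simp only [Real.fourier_eq, Circle.smul_def, smul_eq_mul] at hf' hg' ⊢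
  simp only [mul_add, mul_left_comm _ a, mul_left_comm _ b]
  rw [integral_add (hf'.const_mul a) (hg'.const_mul b), integral_const_mul, integral_const_mul]

theorem re_fourierInv_ofReal {g : ℝ → ℝ} (hg : Integrable g) (t : ℝ) :
    (𝓕⁻ (fun u ↦ (g u : ℂ)) t).re = ∫ u, Real.cos (2 * π * t * u) * g u := by
  have hint := (Real.fourierIntegral_convergent_iff (μ := volume) (E := ℂ) (-t)).2 hg.ofReal
  rw [Real.fourierInv_eq]
  simp only [inner_neg_right, neg_neg, Circle.smul_def, Real.fourierChar_apply, smul_eq_mul,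
    Real.inner_apply] at hint ⊢
  refine (integral_re hint).symm.trans (integral_congr_ae (.of_forall fun u ↦ ?_))
  change (Complex.exp _ * (g u : ℂ)).re = _
  rw [Complex.re_mul_ofReal, Complex.exp_ofReal_mul_I_re]
  ring_nf

theorem integrable_cexp_mul_abs {c : ℂ} (hc : c.re < 0) :
    Integrable fun t : ℝ ↦ Complex.exp (c * |t|) := by
  have hIic : IntegrableOn (fun t : ℝ ↦ Complex.exp (c * |t|)) (Iic 0) :=
    (integrableOn_exp_mul_complex_Iic (a := -c) (by simpa) 0).congr_fun
      (fun t ht ↦ by simp [abs_of_nonpos (mem_Iic.mp ht)]) measurableSet_Iic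
  have hIoi : IntegrableOn (fun t : ℝ ↦ Complex.exp (c * |t|)) (Ioi 0) :=
    (integrableOn_exp_mul_complex_Ioi hc 0).congr_fun
      (fun t ht ↦ by simp [abs_of_pos (mem_Ioi.mp ht)]) measurableSet_Ioi
  simpa [Iic_union_Ioi] using hIic.union hIoi

theorem fourier_cexp_mul_abs {c : ℂ} (hc : c.re < 0) (w : ℝ) :
    𝓕 (fun t : ℝ ↦ Complex.exp (c * |t|)) w = -2 * c / (c ^ 2 + (2 * π * w) ^ 2) := by
  set x : ℂ := 2 * π * w
  have hplus : c + x * Complex.I ≠ 0 := fun h ↦ by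
    simpa [x, hc.ne] using congrArg Complex.re h
  have hminus : c - x * Complex.I ≠ 0 := fun h ↦ by
    simpa [x, hc.ne] using congrArg Complex.re h
  have hint := (Real.fourierIntegral_convergent_iff (μ := volume) w).2 (integrable_cexp_mul_abs hc)
  simp only [Real.inner_apply] at hint
  rw [Real.fourier_real_eq, ← intervalIntegral.integral_Iic_add_Ioi (b := 0) hint.integrableOn
    hint.integrableOn]
  have hIic : ∫ t in Iic (0 : ℝ), 𝐞 (-(t * w)) • Complex.exp (c * |t|)
      = ∫ t in Iic (0 : ℝ), Complex.exp ((-c - x * Complex.I) * t) :=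
    setIntegral_congr_fun measurableSet_Iic fun t ht ↦ by
      rw [Circle.smul_def, Real.fourierChar_apply, smul_eq_mul, ← Complex.exp_add,
        abs_of_nonpos ht]
      congr 1; push_cast [x]; ring
  have hIoi : ∫ t in Ioi (0 : ℝ), 𝐞 (-(t * w)) • Complex.exp (c * |t|)
      = ∫ t in Ioi (0 : ℝ), Complex.exp ((c - x * Complex.I) * t) :=
    setIntegral_congr_fun measurableSet_Ioi fun t ht ↦ by
      rw [Circle.smul_def, Real.fourierChar_apply, smul_eq_mul, ← Complex.exp_add, abs_of_pos ht]
      congr 1; push_cast [x]; ring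
  rw [hIic, hIoi, integral_exp_mul_complex_Iic (by simpa [x] using hc),
    integral_exp_mul_complex_Ioi (by simpa [x] using hc)]
  have hfactor : c ^ 2 + x ^ 2 = (c + x * Complex.I) * (c - x * Complex.I) := by
    ring_nf; rw [Complex.I_sq]; ring
  rw [hfactor, show -c - x * Complex.I = -(c + x * Complex.I) by ring]
  simp only [Complex.ofReal_zero, mul_zero, Complex.exp_zero]
  field_simp
  ring

theorem integrable_inv_one_add_sq_add_pow_four :
    Integrable fun x : ℝ ↦ (1 + x ^ 2 + x ^ 4)⁻¹ :=
  integrable_inv_one_add_sq.mono' (by fun_prop (disch := positivity)) <| .of_forall fun x ↦ by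
    rw [norm_inv, Real.norm_of_nonneg (by positivity)]
    exact inv_anti₀ (by positivity) (le_add_of_nonneg_right (by positivity))

noncomputable def sobolevKernel (t : ℝ) : ℝ :=
  √3 / 3 * Real.exp (-|t| * √3 / 2) * Real.sin (|t| / 2 + π / 6)

noncomputable def kernelRoot : ℂ := (-√3 + Complex.I) / 2

noncomputable def kernelCoeff : ℂ := (√3 - 3 * Complex.I) / 12

lemma ofReal_sqrt_three_sq : ((√3 : ℝ) : ℂ) ^ 2 = 3 := by
  norm_cast; simp

lemma kernelRoot_re_neg : kernelRoot.re < 0 := by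
  have : 0 < √3 := by positivity
  simp [kernelRoot]
  linarith

lemma conj_kernelRoot_re_neg : (conj kernelRoot).re < 0 := by
  simpa using kernelRoot_re_neg

lemma conj_kernelRoot : conj kernelRoot = (-√3 - Complex.I) / 2 := by
  simp [kernelRoot, map_div₀, map_ofNat, sub_eq_add_neg]

lemma conj_kernelCoeff : conj kernelCoeff = (√3 + 3 * Complex.I) / 12 := by
  simp [kernelCoeff, map_div₀, map_ofNat, sub_eq_add_neg]

lemma kernelRoot_sq : kernelRoot ^ 2 = (1 - √3 * Complex.I) / 2 := by
  rw [kernelRoot]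
  linear_combination (1 / 4) * ofReal_sqrt_three_sq + (1 / 4) * Complex.I_sq

lemma kernelCoeff_mul_kernelRoot : kernelCoeff * kernelRoot = √3 / 6 * Complex.I := by
  rw [kernelCoeff, kernelRoot]
  linear_combination (-1 / 24) * ofReal_sqrt_three_sq + (-1 / 8) * Complex.I_sq

lemma sobolevKernel_eq (t : ℝ) :
    (sobolevKernel t : ℂ) = kernelCoeff * Complex.exp (kernelRoot * |t|)
      + conj kernelCoeff * Complex.exp (conj kernelRoot * |t|) := by
  have hζ : kernelRoot * |t| = ↑(-|t| * √3 / 2) + ↑(|t| / 2) * Complex.I := by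
    simp only [kernelRoot]; push_cast; ring
  have hζ' : conj kernelRoot * |t| = ↑(-|t| * √3 / 2) + ↑(-(|t| / 2)) * Complex.I := by
    rw [conj_kernelRoot]; push_cast; ring
  rw [hζ, hζ', Complex.exp_add, Complex.exp_add, Complex.exp_mul_I, Complex.exp_mul_I,
    conj_kernelCoeff, kernelCoeff, sobolevKernel, Real.sin_add, Real.cos_pi_div_six,
    Real.sin_pi_div_six, ← Complex.ofReal_exp]
  generalize Real.exp (-|t| * √3 / 2) = E
  push_cast
  rw [Complex.cos_neg, Complex.sin_neg]
  linear_combination (E * Complex.sin (|t| / 2) / 6) * ofReal_sqrt_three_sq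
    + (E * Complex.sin (|t| / 2) / 2) * Complex.I_sq

lemma kernelCoeff_partial_fractions (x : ℝ) :
    kernelCoeff * (-2 * kernelRoot / (kernelRoot ^ 2 + x ^ 2))
      + conj kernelCoeff * (-2 * conj kernelRoot / (conj kernelRoot ^ 2 + x ^ 2))
      = ((1 + x ^ 2 + x ^ 4)⁻¹ : ℝ) := by
  have hsq' : conj kernelRoot ^ 2 = (1 + √3 * Complex.I) / 2 := by
    rw [← map_pow, kernelRoot_sq]
    simp [map_div₀, map_ofNat, sub_eq_add_neg]
  have hmul' : conj kernelCoeff * conj kernelRoot = -(√3 / 6 * Complex.I) := by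
    rw [← map_mul, kernelCoeff_mul_kernelRoot]
    simp [map_div₀, map_ofNat]
  have hden : (1 - √3 * Complex.I) / 2 + x ^ 2 ≠ 0 := fun h ↦ by
    simpa [← Complex.ofReal_pow] using congrArg Complex.im h
  have hden' : (1 + √3 * Complex.I) / 2 + x ^ 2 ≠ 0 := fun h ↦ by
    simpa [← Complex.ofReal_pow] using congrArg Complex.im h
  have hD : 1 + (x : ℂ) ^ 2 + (x : ℂ) ^ 4 ≠ 0 := by
    exact_mod_cast (by positivity : (0 : ℝ) < 1 + x ^ 2 + x ^ 4).ne'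
  calc _ = -2 * (kernelCoeff * kernelRoot) / (kernelRoot ^ 2 + x ^ 2)
        + -2 * (conj kernelCoeff * conj kernelRoot) / (conj kernelRoot ^ 2 + x ^ 2) := by ring
    _ = _ := by
      rw [kernelCoeff_mul_kernelRoot, hmul', kernelRoot_sq, hsq', div_add_div _ _ hden hden']
      push_cast
      rw [inv_eq_one_div, div_eq_div_iff (mul_ne_zero hden hden') hD]
      linear_combination (1 / 4 - (1 + x ^ 2 + x ^ 4) / 3) * Complex.I ^ 2 * ofReal_sqrt_three_sq
        + 3 * (1 / 4 - (1 + x ^ 2 + x ^ 4) / 3) * Complex.I_sq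

lemma integrable_sobolevKernel : Integrable fun t ↦ (sobolevKernel t : ℂ) := by
  simp only [sobolevKernel_eq]
  exact ((integrable_cexp_mul_abs kernelRoot_re_neg).const_mul _).add
    ((integrable_cexp_mul_abs conj_kernelRoot_re_neg).const_mul _)

lemma fourier_sobolevKernel (w : ℝ) :
    𝓕 (fun t ↦ (sobolevKernel t : ℂ)) w = ((1 + (2 * π * w) ^ 2 + (2 * π * w) ^ 4)⁻¹ : ℝ) := by
  simp only [sobolevKernel_eq]
  rw [Real.fourier_const_mul_add_const_mul (integrable_cexp_mul_abs kernelRoot_re_neg)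
    (integrable_cexp_mul_abs conj_kernelRoot_re_neg), fourier_cexp_mul_abs kernelRoot_re_neg,
    fourier_cexp_mul_abs conj_kernelRoot_re_neg]
  exact_mod_cast kernelCoeff_partial_fractions (2 * π * w)

/-- `∫_ℝ cos(2πtu)/(1 + (2πu)² + (2πu)⁴) du
  = (√3/3) e^{−|t|√3/2} sin(|t|/2 + π/6)`, the reproducing kernel `K_{1,2}`. -/
theorem kernel_K12 (t : ℝ) :
    ∫ u : ℝ, Real.cos (2 * π * t * u) / (1 + (2 * π * u) ^ 2 + (2 * π * u) ^ 4)
      = Real.sqrt 3 / 3 * Real.exp (-|t| * Real.sqrt 3 / 2) * Real.sin (|t| / 2 + π / 6) := by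
  have hsymbol : Integrable fun u : ℝ ↦ (1 + (2 * π * u) ^ 2 + (2 * π * u) ^ 4)⁻¹ :=
    integrable_inv_one_add_sq_add_pow_four.comp_mul_left' (by positivity)
  have hinv : 𝓕⁻ (𝓕 fun t ↦ (sobolevKernel t : ℂ)) t = sobolevKernel t :=
    integrable_sobolevKernel.fourierInv_fourier_eq
      (by rw [funext fourier_sobolevKernel]; exact hsymbol.ofReal)
      (by unfold sobolevKernel; fun_prop)
  have hre := congrArg Complex.re hinv
  rw [funext fourier_sobolevKernel, re_fourierInv_ofReal hsymbol, Complex.ofReal_re] at hre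
  change _ = sobolevKernel t
  simpa only [div_eq_mul_inv] using hre
end

section
/- Let (D, μ) be a probability measure space, H a real Hilbert space, and δ : D → H a strongly measurable map with ‖δ(x)‖ ≤ C for all x ∈ D and some constant C ≥ 0. Let h = ∫_D δ(x) dμ(x) (Bochner integral). Then for every n ≥ 1 there exist points x₁*, …, x_n* ∈ D such that ‖ h − (1/n) ∑_{j=1}^n δ(x_j*) ‖ ≤ C / √n. -/
open MeasureTheory Real

/-! A derandomised Monte Carlo argument. If `∫ g = 0`, the cross term in `∫ ‖a + g x‖²`
vanishes, so some point `x` satisfies `‖a + g x‖² ≤ ‖a‖² + ∫ ‖g‖²`. Choosing the points one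
at a time with `g = δ - h`, whose second moment is at most `∫ ‖δ‖² ≤ C²`, the error sum
`∑ⱼ (δ xⱼ - h)` gains at most `C²` in squared norm per point, hence has norm at most `√n C`. -/

section
variable {D : Type*} [MeasurableSpace D] {μ : Measure D} [IsProbabilityMeasure μ]
  {H : Type*} [NormedAddCommGroup H] [InnerProductSpace ℝ H] [CompleteSpace H]

theorem integral_norm_add_sq_of_integral_eq_zero {g : D → H} (hg : MemLp g 2 μ)
    (hg0 : ∫ x, g x ∂μ = 0) (a : H) :
    ∫ x, ‖a + g x‖ ^ 2 ∂μ = ‖a‖ ^ 2 + ∫ x, ‖g x‖ ^ 2 ∂μ := by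
  have hg1 : Integrable g μ := hg.integrable one_le_two
  simp_rw [norm_add_sq_real]
  rw [integral_add (by fun_prop) hg.integrable_norm_pow', integral_add (by fun_prop) (by fun_prop),
    integral_const_mul, integral_inner hg1, hg0]
  simp

theorem exists_norm_add_sq_le_of_integral_eq_zero {g : D → H} (hg : MemLp g 2 μ)
    (hg0 : ∫ x, g x ∂μ = 0) (a : H) :
    ∃ x, ‖a + g x‖ ^ 2 ≤ ‖a‖ ^ 2 + ∫ x, ‖g x‖ ^ 2 ∂μ :=
  integral_norm_add_sq_of_integral_eq_zero hg hg0 a ▸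
    exists_le_integral ((memLp_const a).add hg).integrable_norm_pow'

theorem integral_sub_integral_eq_zero {f : D → H} (hf : Integrable f μ) :
    ∫ x, (f x - ∫ y, f y ∂μ) ∂μ = 0 := by
  rw [integral_sub hf (integrable_const _)]
  simp

theorem integral_norm_sub_integral_sq_le {f : D → H} (hf : MemLp f 2 μ) :
    ∫ x, ‖f x - ∫ y, f y ∂μ‖ ^ 2 ∂μ ≤ ∫ x, ‖f x‖ ^ 2 ∂μ := by
  have h := integral_norm_add_sq_of_integral_eq_zero (hf.sub (memLp_const _))
    (integral_sub_integral_eq_zero (hf.integrable one_le_two)) (∫ y, f y ∂μ)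
  simp only [Pi.sub_apply, add_sub_cancel] at h
  rw [h]
  exact le_add_of_nonneg_left (sq_nonneg _)

theorem exists_norm_add_sub_integral_sq_le {f : D → H} (hf : MemLp f 2 μ) (a : H) :
    ∃ x, ‖a + (f x - ∫ y, f y ∂μ)‖ ^ 2 ≤ ‖a‖ ^ 2 + ∫ x, ‖f x‖ ^ 2 ∂μ := by
  obtain ⟨x, hx⟩ := exists_norm_add_sq_le_of_integral_eq_zero (hf.sub (memLp_const _))
    (integral_sub_integral_eq_zero (hf.integrable one_le_two)) a
  exact ⟨x, hx.trans (add_le_add_right (integral_norm_sub_integral_sq_le hf) _)⟩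

theorem exists_norm_sum_sub_integral_sq_le {f : D → H} (hf : MemLp f 2 μ) (n : ℕ) :
    ∃ x : Fin n → D, ‖∑ j, (f (x j) - ∫ y, f y ∂μ)‖ ^ 2 ≤ n * ∫ x, ‖f x‖ ^ 2 ∂μ := by
  induction n with
  | zero => simp
  | succ n ih =>
    obtain ⟨x, hx⟩ := ih
    obtain ⟨y, hy⟩ := exists_norm_add_sub_integral_sq_le hf (∑ j, (f (x j) - ∫ y, f y ∂μ))
    refine ⟨Fin.cons y x, ?_⟩
    rw [Fin.sum_univ_succ, add_comm]
    simp only [Fin.cons_zero, Fin.cons_succ]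
    push_cast
    linarith

end

/-- existence of good QMC points. For a probability measure `μ` on `D`,
a strongly measurable `δ : D → H` with `‖δ(x)‖ ≤ C` for all `x`, and `h = ∫ δ dμ`,
for every `n ≥ 1` there exist `x₁*, …, x_n* ∈ D` with
`‖h − (1/n) ∑_j δ(x_j*)‖ ≤ C/√n`. -/
theorem exists_good_qmc_points {D : Type*} [MeasurableSpace D] (μ : Measure D)
    [IsProbabilityMeasure μ] {H : Type*} [NormedAddCommGroup H]
    [InnerProductSpace ℝ H] [CompleteSpace H]
    (δ : D → H) (hmeas : MeasureTheory.StronglyMeasurable δ)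
    (C : ℝ) (hC : 0 ≤ C) (hbound : ∀ x, ‖δ x‖ ≤ C) (n : ℕ) (hn : 1 ≤ n) :
    ∃ x : Fin n → D,
      ‖(∫ y, δ y ∂μ) - ((n : ℝ))⁻¹ • ∑ j : Fin n, δ (x j)‖ ≤ C / Real.sqrt n := by
  have hδ : MemLp δ 2 μ := .of_bound hmeas.aestronglyMeasurable C (ae_of_all _ hbound)
  have h_sq : ∫ x, ‖δ x‖ ^ 2 ∂μ ≤ C ^ 2 :=
    (integral_mono hδ.integrable_norm_pow' (integrable_const _)
      fun x => pow_le_pow_left₀ (norm_nonneg _) (hbound x) 2).trans (by simp)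
  obtain ⟨x, hx⟩ := exists_norm_sum_sub_integral_sq_le hδ n
  have hn_pos : (0 : ℝ) < n := by exact_mod_cast hn
  have h_sum : ‖∑ j, (δ (x j) - ∫ y, δ y ∂μ)‖ ≤ √n * C := by
    rw [← sqrt_sq (norm_nonneg _), ← sqrt_sq hC, ← sqrt_mul hn_pos.le]
    exact sqrt_le_sqrt (hx.trans (by gcongr))
  refine ⟨x, ?_⟩
  calc ‖(∫ y, δ y ∂μ) - (n : ℝ)⁻¹ • ∑ j, δ (x j)‖
      = (n : ℝ)⁻¹ * ‖∑ j, (δ (x j) - ∫ y, δ y ∂μ)‖ := by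
        rw [norm_sub_rev, Finset.sum_sub_distrib, Finset.sum_const, Finset.card_univ,
          Fintype.card_fin, ← norm_smul_of_nonneg (inv_nonneg.2 hn_pos.le), smul_sub,
          ← Nat.cast_smul_eq_nsmul ℝ, smul_smul, inv_mul_cancel₀ hn_pos.ne', one_smul]
    _ ≤ (n : ℝ)⁻¹ * (√n * C) := by gcongr
    _ = C / √n := by
        field_simp
        rw [sq_sqrt hn_pos.le]
end

section
/- Let d ≥ 1 be an integer, β > 0 a real number, and s a real number with 2s − d ≥ β (in particular s > d/2). Then (2π)^{−d/2} ∫_{ℝ^d} (1 + ‖u‖²)^{−s} du ≤ 2 (1 + 1/β) / (2^{d/2} Γ(d/2)), where ‖u‖ is the Euclidean norm and Γ is the Gamma function. -/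
/-!
In polar coordinates the integral is `|S^{d-1}| ∫₀^∞ r^{d-1} (1+r²)^{-s} dr`, where
`|S^{d-1}| = d · vol(B₁) = 2π^{d/2}/Γ(d/2)`, and `(2π)^{-d/2}` turns this constant into
`2/(2^{d/2} Γ(d/2))`. The radial integrand is at most `1` on `(0,1]` and at most `r^{d-1-2s}` on
`(1,∞)`, so the radial integral is at most `1 + 1/(2s-d) ≤ 1 + 1/β`.
-/

open MeasureTheory Real Set Module

section Polar

variable {E : Type*} [NormedAddCommGroup E] [InnerProductSpace ℝ E] [FiniteDimensional ℝ E]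
  [MeasurableSpace E] [BorelSpace E] [Nontrivial E]

theorem integral_fun_norm_eq_mul_integral_Ioi (f : ℝ → ℝ) :
    ∫ x : E, f ‖x‖ = finrank ℝ E * (√π ^ finrank ℝ E / Gamma (finrank ℝ E / 2 + 1)) *
      ∫ r in Ioi (0 : ℝ), r ^ (finrank ℝ E - 1) * f r := by
  rw [integral_fun_norm_addHaar volume f, measureReal_def, InnerProductSpace.volume_ball,
    ENNReal.ofReal_one, one_pow, one_mul, ENNReal.toReal_ofReal (by positivity)]
  simp only [nsmul_eq_mul, smul_eq_mul, mul_assoc]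

end Polar

theorem natCast_mul_sqrt_pi_pow_div_Gamma {n : ℕ} (hn : n ≠ 0) :
    n * (√π ^ n / Gamma (n / 2 + 1)) = 2 * π ^ ((n : ℝ) / 2) / Gamma (n / 2) := by
  have hπ : √π ^ n = π ^ ((n : ℝ) / 2) := by
    rw [sqrt_eq_rpow, ← rpow_natCast, ← rpow_mul pi_pos.le]
    ring_nf
  rw [hπ, Gamma_add_one (by positivity)]
  field_simp

section Radial

variable {n : ℕ} {s : ℝ}

theorem pow_mul_one_add_sq_rpow_neg_le_rpow (hn : 1 ≤ n) (hs : 0 ≤ s) {r : ℝ} (hr : 0 < r) :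
    r ^ (n - 1) * (1 + r ^ 2) ^ (-s) ≤ r ^ ((n : ℝ) - 1 - 2 * s) := by
  have hsq : (r ^ 2) ^ (-s) = r ^ (-(2 * s)) := by
    rw [← rpow_natCast r 2, ← rpow_mul hr.le]
    ring_nf
  calc r ^ (n - 1) * (1 + r ^ 2) ^ (-s) ≤ r ^ ((n : ℝ) - 1) * r ^ (-(2 * s)) := by
        rw [← rpow_natCast, Nat.cast_sub hn, Nat.cast_one, ← hsq]
        exact mul_le_mul_of_nonneg_left
          (rpow_le_rpow_of_nonpos (by positivity) (by linarith) (by linarith)) (by positivity)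
    _ = r ^ ((n : ℝ) - 1 - 2 * s) := by
        rw [← rpow_add hr]
        ring_nf

theorem pow_mul_one_add_sq_rpow_neg_le_one (hs : 0 ≤ s) {r : ℝ} (hr₀ : 0 ≤ r) (hr₁ : r ≤ 1) :
    r ^ (n - 1) * (1 + r ^ 2) ^ (-s) ≤ 1 :=
  mul_le_one₀ (pow_le_one₀ hr₀ hr₁)
    (rpow_nonneg (by positivity) _) (rpow_le_one_of_one_le_of_nonpos (by nlinarith) (by linarith))

theorem integral_Ioi_pow_mul_one_add_sq_rpow_neg_le (hn : 1 ≤ n) (hns : (n : ℝ) < 2 * s) :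
    ∫ r in Ioi (0 : ℝ), r ^ (n - 1) * (1 + r ^ 2) ^ (-s) ≤ 1 + 1 / (2 * s - n) := by
  have hs : 0 ≤ s := by
    have : (1 : ℝ) ≤ n := by exact_mod_cast hn
    linarith
  have hexp : (n : ℝ) - 1 - 2 * s < -1 := by linarith
  have hcont : Continuous fun r : ℝ ↦ r ^ (n - 1) * (1 + r ^ 2) ^ (-s) :=
    (continuous_pow _).mul <| (by fun_prop : Continuous fun r : ℝ ↦ 1 + r ^ 2).rpow_const
      fun _ ↦ .inl (by positivity)
  have hdom := integrableOn_Ioi_rpow_of_lt hexp one_pos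
  have htail : IntegrableOn (fun r : ℝ ↦ r ^ (n - 1) * (1 + r ^ 2) ^ (-s)) (Ioi 1) := by
    refine hdom.mono' hcont.aestronglyMeasurable.restrict ?_
    filter_upwards [ae_restrict_mem measurableSet_Ioi] with r (hr : 1 < r)
    rw [norm_of_nonneg (by positivity)]
    exact pow_mul_one_add_sq_rpow_neg_le_rpow hn hs (by linarith)
  have hnear : ∫ r in Ioc (0 : ℝ) 1, r ^ (n - 1) * (1 + r ^ 2) ^ (-s) ≤ 1 := by
    calc ∫ r in Ioc (0 : ℝ) 1, r ^ (n - 1) * (1 + r ^ 2) ^ (-s)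
        ≤ ∫ _ in Ioc (0 : ℝ) 1, (1 : ℝ) :=
          setIntegral_mono_on hcont.integrableOn_Ioc continuous_const.integrableOn_Ioc
            measurableSet_Ioc fun r hr ↦ pow_mul_one_add_sq_rpow_neg_le_one hs hr.1.le hr.2
      _ = 1 := by simp
  have hfar : ∫ r in Ioi (1 : ℝ), r ^ (n - 1) * (1 + r ^ 2) ^ (-s) ≤ 1 / (2 * s - n) := by
    calc ∫ r in Ioi (1 : ℝ), r ^ (n - 1) * (1 + r ^ 2) ^ (-s)
        ≤ ∫ r in Ioi (1 : ℝ), r ^ ((n : ℝ) - 1 - 2 * s) :=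
          setIntegral_mono_on htail hdom measurableSet_Ioi fun r (hr : 1 < r) ↦
            pow_mul_one_add_sq_rpow_neg_le_rpow hn hs (by linarith)
      _ = 1 / (2 * s - n) := by
          rw [integral_Ioi_rpow_of_lt hexp one_pos, one_rpow,
            show (n : ℝ) - 1 - 2 * s + 1 = -(2 * s - n) by ring, div_neg, neg_div, neg_neg]
  rw [← Ioc_union_Ioi_eq_Ioi zero_le_one,
    setIntegral_union (Ioc_disjoint_Ioi le_rfl) measurableSet_Ioi hcont.integrableOn_Ioc htail]
  exact add_le_add hnear hfar

end Radial

/-- the squared embedding constant of the isotropic Sobolev space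
`H^s(ℝ^d)` satisfies
`(2π)^{−d/2} ∫_{ℝ^d} (1+‖u‖²)^{−s} du ≤ 2(1 + 1/β)/(2^{d/2} Γ(d/2))`
whenever `2s − d ≥ β > 0`. -/
theorem isotropic_embedding_constant_bound (d : ℕ) (hd : 1 ≤ d) (β s : ℝ)
    (hβ : 0 < β) (hs : β ≤ 2 * s - d) :
    (2 * π) ^ (-(d : ℝ) / 2) *
        ∫ u : EuclideanSpace ℝ (Fin d), (1 + ‖u‖ ^ 2) ^ (-s)
      ≤ 2 * (1 + 1 / β) / (2 ^ ((d : ℝ) / 2) * Real.Gamma ((d : ℝ) / 2)) := by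
  have : Nonempty (Fin d) := Fin.pos_iff_nonempty.mp hd
  have hG : 0 < Gamma (d / 2) := Gamma_pos_of_pos (by positivity)
  have hconst : (2 * π) ^ (-(d : ℝ) / 2) * (2 * π ^ ((d : ℝ) / 2) / Gamma (d / 2))
      = 2 / (2 ^ ((d : ℝ) / 2) * Gamma (d / 2)) := by
    rw [mul_rpow zero_le_two pi_pos.le, neg_div, rpow_neg zero_le_two, rpow_neg pi_pos.le]
    field_simp
  rw [integral_fun_norm_eq_mul_integral_Ioi (fun r ↦ (1 + r ^ 2) ^ (-s)), finrank_euclideanSpace,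
    Fintype.card_fin, natCast_mul_sqrt_pi_pow_div_Gamma (by omega), ← mul_assoc, hconst]
  calc 2 / (2 ^ ((d : ℝ) / 2) * Gamma (d / 2)) *
        ∫ r in Ioi (0 : ℝ), r ^ (d - 1) * (1 + r ^ 2) ^ (-s)
      ≤ 2 / (2 ^ ((d : ℝ) / 2) * Gamma (d / 2)) * (1 + 1 / (2 * s - d)) := by
        gcongr
        exact integral_Ioi_pow_mul_one_add_sq_rpow_neg_le hd (by linarith)
    _ ≤ 2 / (2 ^ ((d : ℝ) / 2) * Gamma (d / 2)) * (1 + 1 / β) := by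
        gcongr
    _ = 2 * (1 + 1 / β) / (2 ^ ((d : ℝ) / 2) * Gamma (d / 2)) := by ring
end
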